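/- Let m1, m2 ≥ 0 with m = m1 + m2 ≥ 1, let U ⊆ ℝ² be open, and let f : U → ℝ be of class C^m. Let x ∈ U have barycentric coordinates β = (β1, β2, β3) with respect to p1, p2, p3, and let α₁, α₂ ∈ ℝ³ be the directional coordinates of the standard basis vectors e1 = (1,0) and e2 = (0,1) of ℝ². Then the mixed partial derivative ∂^m f / (∂x1^{m1} ∂x2^{m2}) at x equals the sum, over all multi-indices i₁ ∈ ℕ³ with |i₁| = m1 and i₂ ∈ ℕ³ with |i₂| = m2, of (m1 choose i₁)·(m2 choose i₂)·α₁^{i₁}·α₂^{i₂}·(∂^m g / ∂b^{i₁+i₂})(β), where (m choose i) is the multinomial coefficient, α^i denotes the multi-index power, and g = f ∘ L. -/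

import Mathlib

/-!
Write `w = (p1, p2, p3)`. Since `D_v` is linear in `v` and the directional derivatives of a `C^m`
function commute, `D_{∑ cⱼ wⱼ}^n` expands like a power of a sum of commuting variables:
`D_{∑ cⱼ wⱼ}^n = ∑_{|i| = n} (n choose i) c^i D_w^i` on functions of class `C^n`. Applying this to
`e1 = ∑ α₁ⱼ wⱼ` and `e2 = ∑ α₂ⱼ wⱼ` expands the left-hand side, and the chain rule for
`g = f ∘ L`, with `L eⱼ = wⱼ` and `L β = x`, identifies `∂_b^K g (β)` with `D_w^K f (x)`.
-/

/-- The directional-derivative operator `D_v`. -/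
noncomputable def dirDeriv {E : Type*} [NormedAddCommGroup E] [NormedSpace ℝ E]
    (v : E) (f : E → ℝ) : E → ℝ :=
  fun z => fderiv ℝ f z v

open Finset Function Set

section CoeffPairing

variable {ι R : Type*} [CommSemiring R]

noncomputable def coeffPairing (T : (ι → ℕ) → R) : AddMonoidAlgebra R (ι → ℕ) →ₗ[R] R :=
  Finsupp.linearCombination R T ∘ₗ (AddMonoidAlgebra.coeffLinearEquiv R).toLinearMap

theorem coeffPairing_single (T : (ι → ℕ) → R) (a : ι → ℕ) (r : R) :
    coeffPairing T (.single a r) = r * T a := by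
  simp [coeffPairing]

theorem coeffPairing_sum_single_pow [Fintype ι] [DecidableEq ι] (T : (ι → ℕ) → R) (c : ι → R)
    (n : ℕ) :
    coeffPairing T ((∑ j, .single (Pi.single j 1) (c j)) ^ n) =
      ∑ i ∈ piAntidiag univ n, (Nat.multinomial univ i : R) * (∏ j, c j ^ i j) * T i := by
  rw [sum_pow_eq_sum_piAntidiag, map_sum]
  refine sum_congr rfl fun i _ => ?_
  have hi : ∑ j, i j • (Pi.single j 1 : ι → ℕ) = i := by
    ext k
    simp [Finset.sum_apply, Pi.single_apply]
  simp only [AddMonoidAlgebra.single_pow, AddMonoidAlgebra.prod_single, hi,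
    AddMonoidAlgebra.natCast_def, AddMonoidAlgebra.single_mul_single, zero_add, coeffPairing_single]

theorem coeffPairing_single_mul (T : (ι → ℕ) → R) (a : ι → ℕ) (r : R)
    (x : AddMonoidAlgebra R (ι → ℕ)) :
    coeffPairing T (.single a r * x) = r * coeffPairing (fun i => T (a + i)) x := by
  induction x using AddMonoidAlgebra.induction_linear with
  | zero => simp
  | add x y hx hy => simp [mul_add, hx, hy]
  | single b s => simp [AddMonoidAlgebra.single_mul_single, coeffPairing_single, mul_assoc]

/-- The coefficient form of `P ^ (n + 1) = P * P ^ n` for `P = ∑ l, c l X^{e_l}` in `R[ι → ℕ]`,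
read off through `coeffPairing T`, which sends `X^a` to `T a`. -/
theorem Finset.sum_piAntidiag_succ_multinomial [Fintype ι] [DecidableEq ι] (c : ι → R)
    (T : (ι → ℕ) → R) (n : ℕ) :
    ∑ i ∈ piAntidiag univ (n + 1), (Nat.multinomial univ i : R) * (∏ j, c j ^ i j) * T i =
      ∑ l, c l * ∑ i ∈ piAntidiag univ n,
        (Nat.multinomial univ i : R) * (∏ j, c j ^ i j) * T (Pi.single l 1 + i) := by
  simp only [← coeffPairing_sum_single_pow, pow_succ', sum_mul, map_sum, coeffPairing_single_mul]

end CoeffPairing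

section DirDeriv

variable {E F : Type*} [NormedAddCommGroup E] [NormedSpace ℝ E]
  [NormedAddCommGroup F] [NormedSpace ℝ F] {U : Set E} {f g : E → ℝ}

theorem eqOn_dirDeriv_of_eqOn (hU : IsOpen U) (h : EqOn f g U) (v : E) :
    EqOn (dirDeriv v f) (dirDeriv v g) U := fun x hx => by
  simp only [dirDeriv, (Filter.eventuallyEq_of_mem (hU.mem_nhds hx) h).fderiv_eq]

theorem eqOn_iterate_dirDeriv_of_eqOn (hU : IsOpen U) (h : EqOn f g U) (v : E) (k : ℕ) :
    EqOn ((dirDeriv v)^[k] f) ((dirDeriv v)^[k] g) U := by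
  induction k generalizing f g with
  | zero => exact h
  | succ k ih => exact ih (eqOn_dirDeriv_of_eqOn hU h v)

theorem contDiffOn_dirDeriv (hU : IsOpen U) {n : WithTop ℕ∞} (hf : ContDiffOn ℝ (n + 1) f U)
    (v : E) : ContDiffOn ℝ n (dirDeriv v f) U := by
  refine ((ContinuousLinearMap.apply ℝ ℝ v).contDiff.comp_contDiffOn
    (hf.fderivWithin hU.uniqueDiffOn le_rfl)).congr fun z hz => ?_
  simp [dirDeriv, fderivWithin_of_isOpen hU hz]

theorem contDiffOn_iterate_dirDeriv (hU : IsOpen U) {n : WithTop ℕ∞} {k : ℕ}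
    (hf : ContDiffOn ℝ (n + k) f U) (v : E) : ContDiffOn ℝ n ((dirDeriv v)^[k] f) U := by
  induction k generalizing f with
  | zero => simpa using hf
  | succ k ih =>
    refine ih (contDiffOn_dirDeriv hU ?_ v)
    rwa [Nat.cast_succ, ← add_assoc] at hf

theorem dirDeriv_sum_smul {ι : Type*} (s : Finset ι) (c : ι → ℝ) (w : ι → E) (f : E → ℝ) (x : E) :
    dirDeriv (∑ j ∈ s, c j • w j) f x = ∑ j ∈ s, c j * dirDeriv (w j) f x := by
  simp [dirDeriv]

theorem dirDeriv_sum_mul {ι : Type*} (s : Finset ι) (c : ι → ℝ) (h : ι → E → ℝ) (v : E) {x : E}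
    (hd : ∀ a ∈ s, DifferentiableAt ℝ (h a) x) :
    dirDeriv v (fun z => ∑ a ∈ s, c a * h a z) x = ∑ a ∈ s, c a * dirDeriv v (h a) x := by
  simp only [dirDeriv, fderiv_fun_sum fun a ha => (hd a ha).const_mul (c a),
    FunLike.coe_sum, Finset.sum_apply]
  exact sum_congr rfl fun a ha => by simp [fderiv_const_mul (hd a ha)]

theorem eqOn_iterate_dirDeriv_sum_mul {ι : Type*} (hU : IsOpen U) (s : Finset ι) (c : ι → ℝ)
    {h : ι → E → ℝ} (v : E) (k : ℕ) (hh : ∀ a ∈ s, ContDiffOn ℝ k (h a) U) :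
    EqOn ((dirDeriv v)^[k] (fun z => ∑ a ∈ s, c a * h a z))
      (fun z => ∑ a ∈ s, c a * (dirDeriv v)^[k] (h a) z) U := by
  induction k generalizing h with
  | zero => exact fun _ _ => rfl
  | succ k ih =>
    refine (eqOn_iterate_dirDeriv_of_eqOn hU (fun y hy => dirDeriv_sum_mul s c h v fun a ha =>
      ((hh a ha).differentiableOn (by simp)).differentiableAt (hU.mem_nhds hy)) v k).trans ?_
    exact ih fun a ha => contDiffOn_dirDeriv hU (hh a ha) v

theorem dirDeriv_comm {x : E} (hf : ContDiffAt ℝ 2 f x) (u v : E) :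
    dirDeriv u (dirDeriv v f) x = dirDeriv v (dirDeriv u f) x := by
  have hdiff : DifferentiableAt ℝ (fderiv ℝ f) x :=
    (hf.fderiv_right (m := 1) le_rfl).differentiableAt one_ne_zero
  have hsnd : ∀ u v : E, dirDeriv u (dirDeriv v f) x = fderiv ℝ (fderiv ℝ f) x u v := fun u v => by
    unfold dirDeriv
    simp [fderiv_clm_apply hdiff (differentiableAt_const v)]
  rw [hsnd, hsnd]
  exact hf.isSymmSndFDerivAt (by simp) u v

theorem eqOn_dirDeriv_iterate_dirDeriv_comm (hU : IsOpen U) (u v : E) {k : ℕ}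
    (hf : ContDiffOn ℝ (k + 1) f U) :
    EqOn (dirDeriv u ((dirDeriv v)^[k] f)) ((dirDeriv v)^[k] (dirDeriv u f)) U := by
  induction k generalizing f with
  | zero => exact fun _ _ => rfl
  | succ k ih =>
    have hvf : ContDiffOn ℝ (k + 1) (dirDeriv v f) U := contDiffOn_dirDeriv hU (by simpa using hf) v
    refine (ih hvf).trans (eqOn_iterate_dirDeriv_of_eqOn hU (fun y hy => ?_) v k)
    have hf2 : ContDiffOn ℝ 2 f U := hf.of_le (by exact_mod_cast (by omega : 2 ≤ k + 1 + 1))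
    exact dirDeriv_comm (hf2.contDiffAt (hU.mem_nhds hy)) u v

theorem dirDeriv_comp_continuousLinearMap (L : F →L[ℝ] E) {x : F} (hf : DifferentiableAt ℝ f (L x))
    (u : F) : dirDeriv u (f ∘ L) x = dirDeriv (L u) f (L x) := by
  simp [dirDeriv, fderiv_comp x hf L.differentiableAt]

theorem eqOn_iterate_dirDeriv_comp_continuousLinearMap (hU : IsOpen U) (L : F →L[ℝ] E) (u : F)
    {k : ℕ} (hf : ContDiffOn ℝ k f U) :
    EqOn ((dirDeriv u)^[k] (f ∘ L)) ((dirDeriv (L u))^[k] f ∘ L) (L ⁻¹' U) := by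
  induction k generalizing f with
  | zero => exact fun _ _ => rfl
  | succ k ih =>
    refine (eqOn_iterate_dirDeriv_of_eqOn (hU.preimage L.continuous) (fun y hy => ?_) u k).trans
      (ih (contDiffOn_dirDeriv hU hf (L u)))
    exact dirDeriv_comp_continuousLinearMap L
      ((hf.differentiableOn (by simp)).differentiableAt (hU.mem_nhds hy)) u

end DirDeriv

section MixedDirDeriv

variable {E F : Type*} [NormedAddCommGroup E] [NormedSpace ℝ E]
  [NormedAddCommGroup F] [NormedSpace ℝ F] {U : Set E} {f : E → ℝ}

/-- `D_w^i f`; when `w` is the standard basis of `ℝ³` this is `∂^{|i|} f / ∂b^i`. -/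
noncomputable def mixedDirDeriv (w : Fin 3 → E) (i : Fin 3 → ℕ) (f : E → ℝ) : E → ℝ :=
  (dirDeriv (w 0))^[i 0] ((dirDeriv (w 1))^[i 1] ((dirDeriv (w 2))^[i 2] f))

@[simp]
theorem mixedDirDeriv_zero (w : Fin 3 → E) (f : E → ℝ) : mixedDirDeriv w 0 f = f := rfl

theorem contDiffOn_mixedDirDeriv (hU : IsOpen U) (w : Fin 3 → E) {i : Fin 3 → ℕ}
    {n : WithTop ℕ∞} (hf : ContDiffOn ℝ (n + ↑(∑ j, i j)) f U) :
    ContDiffOn ℝ n (mixedDirDeriv w i f) U := by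
  refine contDiffOn_iterate_dirDeriv hU (contDiffOn_iterate_dirDeriv hU
    (contDiffOn_iterate_dirDeriv hU ?_ _) _) _
  simpa [Fin.sum_univ_three, add_assoc] using hf

theorem eqOn_mixedDirDeriv_comp_continuousLinearMap (hU : IsOpen U) (L : F →L[ℝ] E)
    (w : Fin 3 → F) {i : Fin 3 → ℕ} (hf : ContDiffOn ℝ ↑(∑ j, i j) f U) :
    EqOn (mixedDirDeriv w i (f ∘ L)) (mixedDirDeriv (L ∘ w) i f ∘ L) (L ⁻¹' U) := by
  have hUL := hU.preimage L.continuous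
  rw [Fin.sum_univ_three] at hf
  have h2 := eqOn_iterate_dirDeriv_comp_continuousLinearMap hU L (w 2) (k := i 2)
    (hf.of_le (by exact_mod_cast (by omega : i 2 ≤ i 0 + i 1 + i 2)))
  have h1 := eqOn_iterate_dirDeriv_comp_continuousLinearMap hU L (w 1) (k := i 1)
    (contDiffOn_iterate_dirDeriv hU (n := i 1) (k := i 2)
      (hf.of_le (by exact_mod_cast (by omega : i 1 + i 2 ≤ i 0 + i 1 + i 2))) (L (w 2)))
  have h0 := eqOn_iterate_dirDeriv_comp_continuousLinearMap hU L (w 0) (k := i 0)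
    (contDiffOn_iterate_dirDeriv hU (n := i 0) (k := i 1) (contDiffOn_iterate_dirDeriv hU
      (n := i 0 + i 1) (k := i 2) (by exact_mod_cast hf) (L (w 2))) (L (w 1)))
  exact (eqOn_iterate_dirDeriv_of_eqOn hUL (eqOn_iterate_dirDeriv_of_eqOn hUL h2 _ _) _ _).trans
    ((eqOn_iterate_dirDeriv_of_eqOn hUL h1 _ _).trans h0)

theorem eqOn_dirDeriv_mixedDirDeriv (hU : IsOpen U) (w : Fin 3 → E) {i : Fin 3 → ℕ}
    (hf : ContDiffOn ℝ (↑(∑ j, i j) + 1) f U) (l : Fin 3) :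
    EqOn (dirDeriv (w l) (mixedDirDeriv w i f)) (mixedDirDeriv w (Pi.single l 1 + i) f) U := by
  rw [Fin.sum_univ_three] at hf
  have h12 : ContDiffOn ℝ (↑(i 0) + 1) ((dirDeriv (w 1))^[i 1] ((dirDeriv (w 2))^[i 2] f)) U :=
    contDiffOn_iterate_dirDeriv hU (contDiffOn_iterate_dirDeriv hU
      (hf.of_le (le_of_eq (by push_cast; ring))) _) _
  have h2 : ContDiffOn ℝ (↑(i 1) + 1) ((dirDeriv (w 2))^[i 2] f) U :=
    contDiffOn_iterate_dirDeriv hU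
      (hf.of_le (by exact_mod_cast (by omega : i 1 + 1 + i 2 ≤ i 0 + i 1 + i 2 + 1))) _
  fin_cases l
  · exact fun y _ => by simp [mixedDirDeriv, add_comm 1, iterate_succ_apply']
  · refine (eqOn_dirDeriv_iterate_dirDeriv_comm hU (w 1) (w 0) h12).trans fun y _ => ?_
    simp [mixedDirDeriv, add_comm 1, iterate_succ_apply']
  · refine (eqOn_dirDeriv_iterate_dirDeriv_comm hU (w 2) (w 0) h12).trans ?_
    refine (eqOn_iterate_dirDeriv_of_eqOn hU
      (eqOn_dirDeriv_iterate_dirDeriv_comm hU (w 2) (w 1) h2) _ _).trans fun y _ => ?_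
    simp [mixedDirDeriv, add_comm 1, iterate_succ_apply']

theorem eqOn_iterate_dirDeriv_mixedDirDeriv (hU : IsOpen U) (w : Fin 3 → E) (c : Fin 3 → ℝ)
    (n : ℕ) {j : Fin 3 → ℕ} (hf : ContDiffOn ℝ ↑(n + ∑ k, j k) f U) :
    EqOn ((dirDeriv (∑ l, c l • w l))^[n] (mixedDirDeriv w j f))
      (fun y => ∑ i ∈ piAntidiag univ n,
        (Nat.multinomial univ i : ℝ) * (∏ l, c l ^ i l) * mixedDirDeriv w (j + i) f y) U := by
  induction n generalizing j with
  | zero => intro y _; simp [Nat.multinomial]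
  | succ n ih =>
    have hsum (l : Fin 3) : ∑ k, (Pi.single l 1 + j : Fin 3 → ℕ) k = ∑ k, j k + 1 := by
      simp [sum_add_distrib, add_comm]
    have hstep : EqOn (dirDeriv (∑ l, c l • w l) (mixedDirDeriv w j f))
        (fun y => ∑ l, c l * mixedDirDeriv w (Pi.single l 1 + j) f y) U := fun y hy => by
      rw [dirDeriv_sum_smul]
      exact sum_congr rfl fun l _ => by
        rw [eqOn_dirDeriv_mixedDirDeriv hU w (hf.of_le (by exact_mod_cast (by omega))) l hy]
    intro y hy
    rw [iterate_succ_apply, eqOn_iterate_dirDeriv_of_eqOn hU hstep _ n hy,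
      eqOn_iterate_dirDeriv_sum_mul hU univ c _ n (fun l _ => contDiffOn_mixedDirDeriv hU w
        (hf.of_le (by rw [hsum]; exact_mod_cast (by omega)))) hy]
    dsimp only
    rw [sum_piAntidiag_succ_multinomial]
    refine sum_congr rfl fun l _ => ?_
    rw [ih (by rw [hsum]; exact hf.of_le (by exact_mod_cast (by omega))) hy]
    simp only [add_assoc, add_left_comm j]

theorem iterate_dirDeriv_iterate_dirDeriv_sum_smul (hU : IsOpen U) (w : Fin 3 → E)
    (c d : Fin 3 → ℝ) {m1 m2 : ℕ} (hf : ContDiffOn ℝ ↑(m1 + m2) f U) {x : E} (hx : x ∈ U) :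
    (dirDeriv (∑ l, c l • w l))^[m1] ((dirDeriv (∑ l, d l • w l))^[m2] f) x =
      ∑ i₁ ∈ piAntidiag univ m1, ∑ i₂ ∈ piAntidiag univ m2,
        (Nat.multinomial univ i₁ : ℝ) * (Nat.multinomial univ i₂ : ℝ) *
          (∏ l, c l ^ i₁ l) * (∏ l, d l ^ i₂ l) * mixedDirDeriv w (i₁ + i₂) f x := by
  have hinner := eqOn_iterate_dirDeriv_mixedDirDeriv hU w d m2 (j := 0) (hf.of_le (by simp))
  simp only [mixedDirDeriv_zero, zero_add] at hinner
  calc _ = ∑ i₂ ∈ piAntidiag univ m2, (Nat.multinomial univ i₂ : ℝ) * (∏ l, d l ^ i₂ l) *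
          (dirDeriv (∑ l, c l • w l))^[m1] (mixedDirDeriv w i₂ f) x := by
        rw [eqOn_iterate_dirDeriv_of_eqOn hU hinner _ m1 hx]
        refine eqOn_iterate_dirDeriv_sum_mul hU _ _ _ m1 (fun i₂ hi₂ => ?_) hx
        exact contDiffOn_mixedDirDeriv hU w (hf.of_le (by simp [(mem_piAntidiag.1 hi₂).1]))
    _ = ∑ i₂ ∈ piAntidiag univ m2, (Nat.multinomial univ i₂ : ℝ) * (∏ l, d l ^ i₂ l) *
          ∑ i₁ ∈ piAntidiag univ m1, (Nat.multinomial univ i₁ : ℝ) * (∏ l, c l ^ i₁ l) *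
            mixedDirDeriv w (i₂ + i₁) f x := by
        refine sum_congr rfl fun i₂ hi₂ => ?_
        rw [eqOn_iterate_dirDeriv_mixedDirDeriv hU w c m1 (by rwa [(mem_piAntidiag.1 hi₂).1]) hx]
    _ = _ := by
        simp_rw [mul_sum]
        rw [sum_comm]
        refine sum_congr rfl fun i₁ _ => sum_congr rfl fun i₂ _ => ?_
        rw [add_comm i₂]
        ring

end MixedDirDeriv

theorem mixed_partial_derivative_formula
    (p1 p2 p3 : ℝ × ℝ)
    (m1 m2 : ℕ)
    (U : Set (ℝ × ℝ)) (hU : IsOpen U)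
    (f : ℝ × ℝ → ℝ) (hf : ContDiffOn ℝ (m1 + m2) f U)
    (x : ℝ × ℝ) (hx : x ∈ U)
    (β : Fin 3 → ℝ)
    (hβx : x = β 0 • p1 + β 1 • p2 + β 2 • p3)
    (α₁ α₂ : Fin 3 → ℝ)
    (hα₁ : ((1 : ℝ), (0 : ℝ)) = α₁ 0 • p1 + α₁ 1 • p2 + α₁ 2 • p3)
    (hα₂ : ((0 : ℝ), (1 : ℝ)) = α₂ 0 • p1 + α₂ 1 • p2 + α₂ 2 • p3) :
    ((dirDeriv ((1 : ℝ), (0 : ℝ)))^[m1] ((dirDeriv ((0 : ℝ), (1 : ℝ)))^[m2] f)) x =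
      ∑ i₁ ∈ Finset.Nat.antidiagonalTuple 3 m1,
        ∑ i₂ ∈ Finset.Nat.antidiagonalTuple 3 m2,
          (Nat.multinomial Finset.univ i₁ : ℝ) * (Nat.multinomial Finset.univ i₂ : ℝ) *
          (∏ j, α₁ j ^ i₁ j) * (∏ j, α₂ j ^ i₂ j) *
          ((dirDeriv (Pi.single 0 1 : Fin 3 → ℝ))^[i₁ 0 + i₂ 0]
            ((dirDeriv (Pi.single 1 1 : Fin 3 → ℝ))^[i₁ 1 + i₂ 1]
              ((dirDeriv (Pi.single 2 1 : Fin 3 → ℝ))^[i₁ 2 + i₂ 2]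
                (fun b : Fin 3 → ℝ => f (b 0 • p1 + b 1 • p2 + b 2 • p3))))) β := by
  set w : Fin 3 → ℝ × ℝ := ![p1, p2, p3]
  set L : (Fin 3 → ℝ) →L[ℝ] ℝ × ℝ := (Fintype.linearCombination ℝ w).toContinuousLinearMap
  have hsum (b : Fin 3 → ℝ) : b 0 • p1 + b 1 • p2 + b 2 • p3 = ∑ j, b j • w j := by
    simp [Fin.sum_univ_three, w]
  have hL (b : Fin 3 → ℝ) : L b = ∑ j, b j • w j := Fintype.linearCombination_apply ℝ w b
  have hLw : L ∘ (Pi.single · 1) = w := by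
    funext j
    simp [L, Fintype.linearCombination_apply_single]
  have hLβ : L β = x := by rw [hβx, hsum, hL]
  have hf : ContDiffOn ℝ ↑(m1 + m2) f U := by exact_mod_cast hf
  rw [hα₁, hα₂, hsum α₁, hsum α₂, iterate_dirDeriv_iterate_dirDeriv_sum_smul hU w α₁ α₂ hf hx]
  simp only [hsum, ← hL, ← piAntidiag_univ_fin_eq_antidiagonalTuple]
  refine sum_congr rfl fun i₁ hi₁ => sum_congr rfl fun i₂ hi₂ => ?_
  have hK : ∑ j, (i₁ + i₂) j = m1 + m2 := by
    simp [sum_add_distrib, (mem_piAntidiag.1 hi₁).1, (mem_piAntidiag.1 hi₂).1]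
  have hchain := eqOn_mixedDirDeriv_comp_continuousLinearMap hU L (Pi.single · 1) (hK ▸ hf)
    (show L β ∈ U by rwa [hLβ])
  rw [Function.comp_apply, hLw, hLβ] at hchain
  rw [← hchain]
  rfl
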